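/- Let E be a W*-algebra, H a selfdual Hilbert right E-module, F an involutive unital subalgebra of L_E(H), and suppose F is dense in L_E(H) for the topology of pointwise convergence on the predual of L_E(H). Then F^{cc} = L_E(H), i.e., F^c consists exactly of the elements of the center of L_E(H) commuting with all of L_E(H). -/

import Mathlib

open scoped Topology

/-- The data of a Hilbert right `E`-module structure on a Banach space `H`,
where `E` is a C*-algebra over `𝕜 = ℝ` or `ℂ`: a right module action `smul : H → E → H`
and an `E`-valued inner product `inner : H → H → E`, `E`-linear in the first variable. -/
structure HilbertModuleData (𝕜 E H : Type*) [RCLike 𝕜]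
    [NormedRing E] [StarRing E] [CStarRing E] [NormedAlgebra 𝕜 E] [StarModule 𝕜 E]
    [CompleteSpace E] [PartialOrder E] [StarOrderedRing E]
    [NormedAddCommGroup H] [NormedSpace 𝕜 H] [CompleteSpace H] : Type _ where
  smul : H → E → H
  inner : H → H → E
  add_smul' : ∀ ξ η x, smul (ξ + η) x = smul ξ x + smul η x
  smul_add' : ∀ ξ x y, smul ξ (x + y) = smul ξ x + smul ξ y
  smul_mul' : ∀ ξ x y, smul ξ (x * y) = smul (smul ξ x) y
  smul_one' : ∀ ξ, smul ξ 1 = ξ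
  smul_scalar' : ∀ (c : 𝕜) ξ x, smul (c • ξ) x = c • smul ξ x
  inner_add_left' : ∀ ξ η ζ, inner (ξ + η) ζ = inner ξ ζ + inner η ζ
  inner_smul_left' : ∀ (c : 𝕜) ξ η, inner (c • ξ) η = c • inner ξ η
  inner_smul_module' : ∀ ξ x η, inner (smul ξ x) η = inner ξ η * x
  star_inner' : ∀ ξ η, star (inner ξ η) = inner η ξ
  inner_self_nonneg' : ∀ ξ, 0 ≤ inner ξ ξ
  norm_eq' : ∀ ξ, ‖ξ‖ ^ 2 = ‖inner ξ ξ‖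
  inner_continuous' : ∀ η, Continuous fun ξ => inner ξ η

namespace HilbertModuleData

variable {𝕜 E H : Type*} [RCLike 𝕜]
    [NormedRing E] [StarRing E] [CStarRing E] [NormedAlgebra 𝕜 E] [StarModule 𝕜 E]
    [CompleteSpace E] [PartialOrder E] [StarOrderedRing E]
    [NormedAddCommGroup H] [NormedSpace 𝕜 H] [CompleteSpace H]
    (M : HilbertModuleData 𝕜 E H)

lemma inner_add_right (ξ η ζ : H) :
    M.inner ξ (η + ζ) = M.inner ξ η + M.inner ξ ζ := by
  have h := congrArg star (M.inner_add_left' η ζ ξ)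
  simpa [M.star_inner', star_add] using h

lemma inner_smul_right (c : 𝕜) (ξ η : H) :
    M.inner ξ (c • η) = star c • M.inner ξ η := by
  have h := congrArg star (M.inner_smul_left' c η ξ)
  simpa [M.star_inner', star_smul] using h

/-- A bounded `E`-linear map (module morphism) from `H` to `E`. -/
def IsModuleMap (u : H →L[𝕜] E) : Prop := ∀ ξ x, u (M.smul ξ x) = u ξ * x

/-- `H` is selfdual: every bounded `E`-linear map `H → E` is `⟨·, η⟩` for some `η ∈ H`. -/
def Selfdual : Prop :=
  ∀ u : H →L[𝕜] E, M.IsModuleMap u → ∃ η, ∀ ζ, u ζ = M.inner ζ η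

/-- A Hilbert right `E`-submodule of `H`: a (norm-)closed subspace stable under the
module action. -/
def IsHilbertSubmodule (K : Submodule 𝕜 H) : Prop :=
  (∀ ξ ∈ K, ∀ x : E, M.smul ξ x ∈ K) ∧ IsClosed (K : Set H)

/-- Selfduality of a Hilbert right `E`-submodule `K` of `H`: every bounded `E`-linear
map `K → E` is `⟨·, η⟩` for some `η ∈ K`. -/
def SelfdualSub (K : Submodule 𝕜 H) : Prop :=
  ∀ u : K →L[𝕜] E,
    (∀ (ξ : K) (x : E) (h : M.smul (ξ : H) x ∈ K), u ⟨M.smul (ξ : H) x, h⟩ = u ξ * x) →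
    ∃ η ∈ K, ∀ ζ : K, u ζ = M.inner (ζ : H) η

/-- An adjointable operator on `H`: an element of `L_E(H)`. -/
structure Adjointable : Type _ where
  toFun : H →L[𝕜] H
  adj : H →L[𝕜] H
  inner_adj : ∀ ξ η, M.inner (toFun ξ) η = M.inner ξ (adj η)

variable {M}

/-- The identity operator in `L_E(H)`. -/
def idA : M.Adjointable := ⟨ContinuousLinearMap.id 𝕜 H, ContinuousLinearMap.id 𝕜 H, fun _ _ => rfl⟩

/-- Product in `L_E(H)`. -/
def mulA (u v : M.Adjointable) : M.Adjointable where
  toFun := u.toFun ∘L v.toFun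
  adj := v.adj ∘L u.adj
  inner_adj := by
    intro ξ η
    simp only [ContinuousLinearMap.comp_apply]
    rw [u.inner_adj, v.inner_adj]

/-- Sum in `L_E(H)`. -/
def addA (u v : M.Adjointable) : M.Adjointable where
  toFun := u.toFun + v.toFun
  adj := u.adj + v.adj
  inner_adj := by
    intro ξ η
    simp only [ContinuousLinearMap.add_apply]
    rw [M.inner_add_left', u.inner_adj, v.inner_adj, ← M.inner_add_right]

/-- Scalar multiple in `L_E(H)`. -/
def smulA (c : 𝕜) (u : M.Adjointable) : M.Adjointable where
  toFun := c • u.toFun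
  adj := star c • u.adj
  inner_adj := by
    intro ξ η
    simp only [ContinuousLinearMap.smul_apply]
    rw [M.inner_smul_left', u.inner_adj, M.inner_smul_right, star_star]

/-- Adjoint (involution) in `L_E(H)`. -/
def starA (u : M.Adjointable) : M.Adjointable where
  toFun := u.adj
  adj := u.toFun
  inner_adj := by
    intro ξ η
    have h := congrArg star (u.inner_adj η ξ)
    simpa [M.star_inner'] using h.symm

variable (M)

/-- The commutant of a subset of `L_E(H)`. -/
def commutant (F : Set M.Adjointable) : Set M.Adjointable :=
  {w | ∀ v ∈ F, w.toFun ∘L v.toFun = v.toFun ∘L w.toFun}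

/-- `F` is an involutive subalgebra of `L_E(H)`. -/
def IsInvolutiveSubalgebra (F : Set M.Adjointable) : Prop :=
  (∀ u ∈ F, ∀ v ∈ F, addA u v ∈ F) ∧ (∀ u ∈ F, ∀ v ∈ F, mulA u v ∈ F) ∧
    (∀ (c : 𝕜), ∀ u ∈ F, smulA c u ∈ F) ∧ (∀ u ∈ F, starA u ∈ F)

/-- `p ∈ Pr L_E(H)`: a self-adjoint idempotent adjointable operator. -/
def IsProjection (p : M.Adjointable) : Prop :=
  p.toFun ∘L p.toFun = p.toFun ∧ p.adj = p.toFun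

variable {P : Type*} [NormedAddCommGroup P] [NormedSpace 𝕜 P]

/-- The weak topology `σ(H, Ḣ)` on `H`: the topology of pointwise convergence on the
functionals `ζ ↦ ⟨⟨ζ, ξ⟩, a⟩`, `a` in the predual of `E`, `ξ ∈ H`.
The predual of `E` is presented by a Banach space `P` together with an isometric
isomorphism `eE : E ≃ P'`. -/
noncomputable def weakTopology (eE : E ≃ₗᵢ[𝕜] StrongDual 𝕜 P) : TopologicalSpace H :=
  ⨅ p : P × H,
    TopologicalSpace.induced (fun ζ : H => eE (M.inner ζ p.2) p.1) inferInstance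

/-- The weak topology `σ(L_E(H), L̈(H))` on `L_E(H)`: the topology of pointwise
convergence on the functionals `u ↦ ⟨⟨u ξ, η⟩, a⟩`. -/
noncomputable def opWeakTopology (eE : E ≃ₗᵢ[𝕜] StrongDual 𝕜 P) : TopologicalSpace M.Adjointable :=
  ⨅ p : P × H × H,
    TopologicalSpace.induced
      (fun w : M.Adjointable => eE (M.inner (w.toFun p.2.1) p.2.2) p.1) inferInstance

end HilbertModuleData

open HilbertModuleData

variable {𝕜 E H P : Type*} [RCLike 𝕜]
    [NormedRing E] [StarRing E] [CStarRing E] [NormedAlgebra 𝕜 E] [StarModule 𝕜 E]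
    [CompleteSpace E] [PartialOrder E] [StarOrderedRing E]
    [NormedAddCommGroup H] [NormedSpace 𝕜 H] [CompleteSpace H]
    [NormedAddCommGroup P] [NormedSpace 𝕜 P]

namespace HilbertModuleData

variable {M : HilbertModuleData 𝕜 E H}

lemma inner_sub_left (ξ η ζ : H) : M.inner (ξ - η) ζ = M.inner ξ ζ - M.inner η ζ :=
  eq_sub_of_add_eq (by rw [← M.inner_add_left', sub_add_cancel])

lemma eq_zero_of_inner_self_eq_zero {ξ : H} (h : M.inner ξ ξ = 0) : ξ = 0 := by
  have hsq := M.norm_eq' ξ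
  rw [h, norm_zero, sq_eq_zero_iff] at hsq
  exact norm_eq_zero.mp hsq

lemma ext_inner_left {ξ ξ' : H} (h : ∀ η, M.inner ξ η = M.inner ξ' η) : ξ = ξ' := by
  refine sub_eq_zero.mp (eq_zero_of_inner_self_eq_zero (M := M) ?_)
  rw [inner_sub_left, h, sub_self]

lemma comp_eq_comp_iff_inner (w v : M.Adjointable) :
    w.toFun ∘L v.toFun = v.toFun ∘L w.toFun ↔
      ∀ ξ η, M.inner (w.toFun (v.toFun ξ)) η = M.inner (w.toFun ξ) (v.adj η) := by
  simp only [ContinuousLinearMap.ext_iff, ContinuousLinearMap.comp_apply, ← v.inner_adj]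
  exact ⟨fun h ξ η => by rw [h], fun h ξ => ext_inner_left (h ξ)⟩

lemma continuous_opWeakTopology_apply (eE : E ≃ₗᵢ[𝕜] StrongDual 𝕜 P) (p : P) (ξ η : H) :
    Continuous[M.opWeakTopology eE, _] fun w : M.Adjointable => eE (M.inner (w.toFun ξ) η) p :=
  continuous_iInf_dom (i := (p, ξ, η)) continuous_induced_dom

/-- The commutant is closed because commuting with `v` is tested by the functionals
`w ↦ ⟨⟨w ξ, η⟩, a⟩` alone, once `v` is moved across the inner product as `v*`. -/
lemma isClosed_commutant (eE : E ≃ₗᵢ[𝕜] StrongDual 𝕜 P) (S : Set M.Adjointable) :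
    IsClosed[M.opWeakTopology eE] (M.commutant S) := by
  let := M.opWeakTopology eE
  have hS : M.commutant S = ⋂ v ∈ S, ⋂ ξ, ⋂ η, ⋂ p,
      {w | eE (M.inner (w.toFun (v.toFun ξ)) η) p = eE (M.inner (w.toFun ξ) (v.adj η)) p} := by
    ext w
    simp only [commutant, Set.mem_ofPred_eq, Set.mem_iInter, comp_eq_comp_iff_inner,
      ← ContinuousLinearMap.ext_iff, eE.injective.eq_iff]
  rw [hS]
  exact isClosed_biInter fun v _ => isClosed_iInter fun ξ => isClosed_iInter fun η =>
    isClosed_iInter fun p => isClosed_eq (continuous_opWeakTopology_apply eE p _ η)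
      (continuous_opWeakTopology_apply eE p ξ _)

lemma subset_commutant_commutant (S : Set M.Adjointable) :
    S ⊆ M.commutant (M.commutant S) :=
  fun v hv _ hw => (hw v hv).symm

lemma commutant_subset {S T : Set M.Adjointable} (h : S ⊆ T) :
    M.commutant T ⊆ M.commutant S :=
  fun _ hw v hv => hw v (h hv)

end HilbertModuleData

theorem double_commutant_eq_univ_of_dense_general
    (M : HilbertModuleData 𝕜 E H)
    (eE : E ≃ₗᵢ[𝕜] StrongDual 𝕜 P)
    (F : Set M.Adjointable)
    (hdense : @Dense _ (M.opWeakTopology eE) F) :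
    M.commutant (M.commutant F) = Set.univ ∧
      M.commutant F = M.commutant (Set.univ : Set M.Adjointable) := by
  let := M.opWeakTopology eE
  have hcc : M.commutant (M.commutant F) = Set.univ :=
    Set.eq_univ_of_univ_subset <| hdense.closure_eq ▸
      closure_minimal (subset_commutant_commutant F) (isClosed_commutant eE _)
  refine ⟨hcc, subset_antisymm ?_ (commutant_subset (Set.subset_univ F))⟩
  intro w hw v _
  have hv : v ∈ M.commutant (M.commutant F) := hcc ▸ Set.mem_univ v
  exact (hv w hw).symm

/-- if the involutive unital subalgebra `F` is dense in `L_E(H)` for the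
topology of pointwise convergence on the predual of `L_E(H)`, then `F^{cc} = L_E(H)`,
i.e. `F^c` consists exactly of the elements commuting with all of `L_E(H)`. -/
theorem double_commutant_eq_univ_of_dense
    (M : HilbertModuleData 𝕜 E H) (hH : M.Selfdual)
    (eE : E ≃ₗᵢ[𝕜] StrongDual 𝕜 P)
    (F : Set M.Adjointable) (hF : M.IsInvolutiveSubalgebra F) (h1 : idA ∈ F)
    (hdense : @Dense _ (M.opWeakTopology eE) F) :
    M.commutant (M.commutant F) = Set.univ ∧
      M.commutant F = M.commutant (Set.univ : Set M.Adjointable) :=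
  double_commutant_eq_univ_of_dense_general M eE F hdense
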